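/- arXiv:1910.00195 — 2 statements merged into one kernel-verified Lean document; each statement's English description precedes it below -/
import Mathlib

section
/- Let n, m be positive integers, let λ_1, …, λ_n : ℝ^m → ℝ be differentiable, and let L(θ̄, θ̂) = L* + (1/2) Σ_{j=1}^n θ_j² λ_j(θ̂) be the valley loss. Let μ be a probability measure on ℝ^n with ∫ θ_j² dμ(θ̄) = c_j < ∞ for each j. Then for every i = 1, …, n and every θ̂ ∈ ℝ^m, the expected alignment of ∇̂λ_i with the degenerate-space gradient satisfies ∫ ⟨∇̂λ_i(θ̂), ∇̂L(θ̄, θ̂)⟩ dμ(θ̄) = (1/2) Σ_{j=1}^n c_j ⟨∇̂λ_i(θ̂), ∇̂λ_j(θ̂)⟩. -/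
/-!
The degenerate-space gradient of the valley loss is `(1/2) ∑ⱼ θⱼ² ∇̂λⱼ`, linear in the squared
coordinates; pairing with `∇̂λᵢ` and integrating therefore replaces each `θⱼ²` by its second
moment `cⱼ`.
-/

open MeasureTheory ComplexConjugate

section Gradient

variable {𝕜 F : Type*} [RCLike 𝕜] [NormedAddCommGroup F] [InnerProductSpace 𝕜 F]
  [CompleteSpace F] {x : F}

theorem HasGradientAt.const_add {f : F → 𝕜} {f' : F} (c : 𝕜) (hf : HasGradientAt f f' x) :
    HasGradientAt (fun y => c + f y) f' x :=
  hasGradientAt_iff_hasFDerivAt.2 (hf.hasFDerivAt.const_add c)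

theorem HasGradientAt.const_mul {f : F → 𝕜} {f' : F} (c : 𝕜) (hf : HasGradientAt f f' x) :
    HasGradientAt (fun y => c * f y) (conj c • f') x := by
  rw [hasGradientAt_iff_hasFDerivAt, map_smulₛₗ, RCLike.conj_conj]
  exact hf.hasFDerivAt.const_mul c

theorem HasGradientAt.fun_sum {ι : Type*} {s : Finset ι} {f : ι → F → 𝕜} {f' : ι → F}
    (hf : ∀ j ∈ s, HasGradientAt (f j) (f' j) x) :
    HasGradientAt (fun y => ∑ j ∈ s, f j y) (∑ j ∈ s, f' j) x := by
  rw [hasGradientAt_iff_hasFDerivAt, map_sum]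
  exact HasFDerivAt.fun_sum fun j hj => (hf j hj).hasFDerivAt

end Gradient

theorem hasGradientAt_valley {F ι : Type*} [NormedAddCommGroup F] [InnerProductSpace ℝ F]
    [CompleteSpace F] [Fintype ι] {lam : ι → F → ℝ} {x : F}
    (hlam : ∀ j, DifferentiableAt ℝ (lam j) x) (Lstar : ℝ) (θ : ι → ℝ) :
    HasGradientAt (fun y => Lstar + (1 / 2) * ∑ j, θ j ^ 2 * lam j y)
      ((1 / 2 : ℝ) • ∑ j, θ j ^ 2 • gradient (lam j) x) x := by
  have hsum := HasGradientAt.fun_sum fun j (_ : j ∈ Finset.univ) =>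
    ((hlam j).hasGradientAt.const_mul (θ j ^ 2))
  simpa only [conj_trivial] using (hsum.const_mul (1 / 2)).const_add Lstar

theorem expected_eigenvalue_alignment_general
    (n m : ℕ)
    (lam : Fin n → EuclideanSpace ℝ (Fin m) → ℝ)
    (hlam : ∀ j, Differentiable ℝ (lam j))
    (Lstar : ℝ)
    (L : (Fin n → ℝ) → EuclideanSpace ℝ (Fin m) → ℝ)
    (hL : ∀ θb θh, L θb θh = Lstar + (1 / 2) * ∑ j, (θb j) ^ 2 * lam j θh)
    (μ : Measure (Fin n → ℝ))
    (c : Fin n → ℝ)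
    (hint : ∀ j, Integrable (fun θb => (θb j) ^ 2) μ)
    (hmom : ∀ j, ∫ θb, (θb j) ^ 2 ∂μ = c j)
    (i : Fin n) (θh : EuclideanSpace ℝ (Fin m)) :
    (∫ θb, (inner ℝ (gradient (lam i) θh) (gradient (L θb) θh) : ℝ) ∂μ)
      = (1 / 2) * ∑ j, c j * (inner ℝ (gradient (lam i) θh) (gradient (lam j) θh) : ℝ) := by
  have hgrad (θb : Fin n → ℝ) :
      gradient (L θb) θh = (1 / 2 : ℝ) • ∑ j, θb j ^ 2 • gradient (lam j) θh := by
    rw [show L θb = _ from funext (hL θb)]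
    exact (hasGradientAt_valley (fun j => (hlam j).differentiableAt) Lstar θb).gradient
  simp_rw [hgrad, real_inner_smul_right, inner_sum, real_inner_smul_right]
  rw [integral_const_mul, integral_finsetSum _ fun j _ => (hint j).mul_const _]
  simp_rw [integral_mul_const, hmom]

/-- For the valley loss `L(θ̄, θ̂) = L* + (1/2) ∑ⱼ θⱼ² λⱼ(θ̂)` and a
probability measure `μ` with second moments `∫ θⱼ² dμ = cⱼ`, for every `i` and `θ̂`
the expected alignment of `∇̂λᵢ` with the degenerate-space gradient satisfies
`∫ ⟨∇̂λᵢ(θ̂), ∇̂L(θ̄,θ̂)⟩ dμ(θ̄) = (1/2) ∑ⱼ cⱼ ⟨∇̂λᵢ(θ̂), ∇̂λⱼ(θ̂)⟩`. -/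
theorem expected_eigenvalue_alignment
    (n m : ℕ) (hn : 0 < n) (hm : 0 < m)
    (lam : Fin n → EuclideanSpace ℝ (Fin m) → ℝ)
    (hlam : ∀ j, Differentiable ℝ (lam j))
    (Lstar : ℝ)
    (L : (Fin n → ℝ) → EuclideanSpace ℝ (Fin m) → ℝ)
    (hL : ∀ θb θh, L θb θh = Lstar + (1 / 2) * ∑ j, (θb j) ^ 2 * lam j θh)
    (μ : Measure (Fin n → ℝ)) [IsProbabilityMeasure μ]
    (c : Fin n → ℝ)
    (hint : ∀ j, Integrable (fun θb => (θb j) ^ 2) μ)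
    (hmom : ∀ j, ∫ θb, (θb j) ^ 2 ∂μ = c j)
    (i : Fin n) (θh : EuclideanSpace ℝ (Fin m)) :
    (∫ θb, (inner ℝ (gradient (lam i) θh) (gradient (L θb) θh) : ℝ) ∂μ)
      = (1 / 2) * ∑ j, c j * (inner ℝ (gradient (lam i) θh) (gradient (lam j) θh) : ℝ) :=
  expected_eigenvalue_alignment_general n m lam hlam Lstar L hL μ c hint hmom i θh
end

section
/- Let N be a positive integer, let B be a nonempty finite index set, and let L_b : ℝ^N → ℝ be differentiable for each b ∈ B, with full-batch loss L = (1/|B|) Σ_{b∈B} L_b. Fix a learning rate η > 0 and an index i ∈ {1, …, N}. Let μ be a probability measure on ℝ^N such that θ_i², θ_i ∂_i L_b(θ), and (∂_i L_b(θ))² are μ-integrable for all b, and suppose the stationarity condition holds for the observable θ_i²: ∫ (1/|B|) Σ_{b∈B} (θ_i − η ∂_i L_b(θ))² dμ(θ) = ∫ θ_i² dμ(θ). Then ∫ θ_i ∂_i L(θ) dμ(θ) = (η/2) ∫ C̃_{ii}(θ) dμ(θ), where C̃_{ii}(θ) = (1/|B|) Σ_{b∈B} (∂_i L_b(θ))²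 is the diagonal two-point noise matrix. -/
open MeasureTheory

/-!
Expanding the square, the batch average of `(θᵢ - η ∂ᵢL_b)²` is
`θᵢ² - 2η θᵢ ∂ᵢL + η² C̃ᵢᵢ`, since the batch average of the gradients is the full gradient.
Integrating against `μ`, stationarity cancels the `θᵢ²` terms and leaves
`2η ∫ θᵢ ∂ᵢL dμ = η² ∫ C̃ᵢᵢ dμ`; dividing by `2η` gives the relation.
-/

theorem fderiv_const_mul_sum_apply {E ι : Type*} [NormedAddCommGroup E] [NormedSpace ℝ E]
    {s : Finset ι} {f : ι → E → ℝ} {x : E} (hf : ∀ b ∈ s, DifferentiableAt ℝ (f b) x)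
    (c : ℝ) (v : E) :
    fderiv ℝ (fun y => c * ∑ b ∈ s, f b y) x v = c * ∑ b ∈ s, fderiv ℝ (f b) x v := by
  rw [fderiv_const_mul (DifferentiableAt.fun_sum hf), fderiv_fun_sum hf]
  simp

theorem mean_sub_mul_sq {B : Type*} [Fintype B] [Nonempty B] (x η : ℝ) (g : B → ℝ) :
    (1 / (Fintype.card B : ℝ)) * ∑ b, (x - η * g b) ^ 2
      = x ^ 2 - 2 * η * (x * ((1 / (Fintype.card B : ℝ)) * ∑ b, g b))
        + η ^ 2 * ((1 / (Fintype.card B : ℝ)) * ∑ b, g b ^ 2) := by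
  have hcard : (Fintype.card B : ℝ) ≠ 0 := by positivity
  simp only [sub_sq, Finset.sum_add_distrib, Finset.sum_sub_distrib, Finset.sum_const,
    Finset.card_univ, nsmul_eq_mul, mul_pow, ← Finset.mul_sum]
  field_simp

theorem integral_mul_mean_eq_of_integral_mean_sub_mul_sq_eq {α B : Type*} [MeasurableSpace α]
    [Fintype B] [Nonempty B] {μ : Measure α} {x : α → ℝ} {g : B → α → ℝ} {η : ℝ} (hη : η ≠ 0)
    (hx : Integrable (fun a => x a ^ 2) μ) (hxg : ∀ b, Integrable (fun a => x a * g b a) μ)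
    (hg : ∀ b, Integrable (fun a => g b a ^ 2) μ)
    (hstat : ∫ a, (1 / (Fintype.card B : ℝ)) * ∑ b, (x a - η * g b a) ^ 2 ∂μ
      = ∫ a, x a ^ 2 ∂μ) :
    ∫ a, x a * ((1 / (Fintype.card B : ℝ)) * ∑ b, g b a) ∂μ
      = η / 2 * ∫ a, (1 / (Fintype.card B : ℝ)) * ∑ b, g b a ^ 2 ∂μ := by
  simp only [mean_sub_mul_sq] at hstat
  set c : ℝ := 1 / (Fintype.card B : ℝ)
  have hxg_mean : Integrable (fun a => x a * (c * ∑ b, g b a)) μ := by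
    simp only [Finset.mul_sum, mul_left_comm (x _)]
    exact integrable_finsetSum _ fun b _ => (hxg b).const_mul c
  have hg_mean : Integrable (fun a => c * ∑ b, g b a ^ 2) μ :=
    (integrable_finsetSum _ fun b _ => hg b).const_mul c
  rw [integral_add (by exact hx.sub (hxg_mean.const_mul _)) (hg_mean.const_mul _),
    integral_sub hx (hxg_mean.const_mul _), integral_const_mul, integral_const_mul] at hstat
  apply mul_left_cancel₀ (mul_ne_zero two_ne_zero hη)
  linear_combination -hstat

theorem fluctuation_dissipation_theta_sq_general
    (N : ℕ)
    (B : Type*) [Fintype B] [Nonempty B]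
    (Lb : B → (Fin N → ℝ) → ℝ)
    (hLb : ∀ b, Differentiable ℝ (Lb b))
    (L : (Fin N → ℝ) → ℝ)
    (hLdef : ∀ θ, L θ = (1 / (Fintype.card B : ℝ)) * ∑ b, Lb b θ)
    (η : ℝ) (hη : 0 < η)
    (i : Fin N)
    (μ : Measure (Fin N → ℝ))
    (hint1 : Integrable (fun θ => (θ i) ^ 2) μ)
    (hint2 : ∀ b, Integrable (fun θ => θ i * fderiv ℝ (Lb b) θ (Pi.single i 1)) μ)
    (hint3 : ∀ b, Integrable (fun θ => (fderiv ℝ (Lb b) θ (Pi.single i 1)) ^ 2) μ)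
    (hstat :
      (∫ θ, (1 / (Fintype.card B : ℝ)) *
          ∑ b, (θ i - η * fderiv ℝ (Lb b) θ (Pi.single i 1)) ^ 2 ∂μ)
        = ∫ θ, (θ i) ^ 2 ∂μ) :
    (∫ θ, θ i * fderiv ℝ L θ (Pi.single i 1) ∂μ)
      = (η / 2) *
        ∫ θ, (1 / (Fintype.card B : ℝ)) *
            ∑ b, (fderiv ℝ (Lb b) θ (Pi.single i 1)) ^ 2 ∂μ := by
  have hL : ∀ θ, fderiv ℝ L θ (Pi.single i 1)
      = (1 / (Fintype.card B : ℝ)) * ∑ b, fderiv ℝ (Lb b) θ (Pi.single i 1) := fun θ => by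
    rw [funext hLdef]
    exact fderiv_const_mul_sum_apply (fun b _ => (hLb b).differentiableAt) _ _
  simp only [hL]
  exact integral_mul_mean_eq_of_integral_mean_sub_mul_sq_eq hη.ne' hint1 hint2 hint3 hstat

/-- (Fluctuation–dissipation relation for the observable `θᵢ²`.)
For differentiable per-batch losses `L_b : ℝᴺ → ℝ` (b in a nonempty finite set `B`)
with full-batch loss `L = (1/|B|) ∑_b L_b`, learning rate `η > 0`, coordinate `i`,
and a probability measure `μ` under which `θᵢ²`, `θᵢ ∂ᵢL_b` and `(∂ᵢL_b)²` are
integrable, if the stationarity condition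
`∫ (1/|B|) ∑_b (θᵢ - η ∂ᵢL_b(θ))² dμ = ∫ θᵢ² dμ` holds, then
`∫ θᵢ ∂ᵢL(θ) dμ = (η/2) ∫ C̃ᵢᵢ(θ) dμ` where `C̃ᵢᵢ(θ) = (1/|B|) ∑_b (∂ᵢL_b(θ))²`. -/
theorem fluctuation_dissipation_theta_sq
    (N : ℕ) (hN : 0 < N)
    (B : Type*) [Fintype B] [Nonempty B]
    (Lb : B → (Fin N → ℝ) → ℝ)
    (hLb : ∀ b, Differentiable ℝ (Lb b))
    (L : (Fin N → ℝ) → ℝ)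
    (hLdef : ∀ θ, L θ = (1 / (Fintype.card B : ℝ)) * ∑ b, Lb b θ)
    (η : ℝ) (hη : 0 < η)
    (i : Fin N)
    (μ : Measure (Fin N → ℝ)) [IsProbabilityMeasure μ]
    (hint1 : Integrable (fun θ => (θ i) ^ 2) μ)
    (hint2 : ∀ b, Integrable (fun θ => θ i * fderiv ℝ (Lb b) θ (Pi.single i 1)) μ)
    (hint3 : ∀ b, Integrable (fun θ => (fderiv ℝ (Lb b) θ (Pi.single i 1)) ^ 2) μ)
    (hstat :
      (∫ θ, (1 / (Fintype.card B : ℝ)) *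
          ∑ b, (θ i - η * fderiv ℝ (Lb b) θ (Pi.single i 1)) ^ 2 ∂μ)
        = ∫ θ, (θ i) ^ 2 ∂μ) :
    (∫ θ, θ i * fderiv ℝ L θ (Pi.single i 1) ∂μ)
      = (η / 2) *
        ∫ θ, (1 / (Fintype.card B : ℝ)) *
            ∑ b, (fderiv ℝ (Lb b) θ (Pi.single i 1)) ^ 2 ∂μ :=
  fluctuation_dissipation_theta_sq_general N B Lb hLb L hLdef η hη i μ hint1 hint2 hint3 hstat
end
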